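/- Let V be a smooth real-valued function on ℝ, E₀ ∈ ℝ, a₀ < b₀, and suppose there exists a continuous function q on ℝ with q(x) > 0 for all x and V(x) − E₀ = (x − a₀)(x − b₀) q(x) for all x ∈ ℝ. Then there exist ε > 0 and continuously differentiable functions a, b on (E₀−ε, E₀+ε) with a(E₀) = a₀, b(E₀) = b₀, a(E) < b(E), V(a(E)) = V(b(E)) = E and V(x) < E for x ∈ (a(E), b(E)), such that: (i) for every E ∈ (E₀−ε, E₀+ε) the function x ↦ (E − V(x))^{−1/2} is integrable on (a(E), b(E)); (ii) the action A(E) := 2 ∫_{a(E)}^{b(E)} √(E − V(x)) dx is differentiable on (E₀−ε, E₀+ε) with A'(E) = ∫_{a(E)}^{b(E)} (E − V(x))^{−1/2} dx > 0. -/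

import Mathlib

open MeasureTheory Set
open Filter Topology

set_option maxHeartbeats 1600000

section Aux

lemma sqrt_lip (u w : ℝ) : |Real.sqrt u - Real.sqrt w| * Real.sqrt |w| ≤ |u - w| := by
  rcases le_or_gt w 0 with hw | hw
  · rw [Real.sqrt_eq_zero'.mpr hw, abs_of_nonpos hw, sub_zero]
    rcases le_or_gt u 0 with hu | hu
    · rw [Real.sqrt_eq_zero'.mpr hu]; simp [abs_nonneg]
    · have h1 : Real.sqrt u ^ 2 = u := Real.sq_sqrt hu.le
      have h2 : Real.sqrt (-w) ^ 2 = -w := Real.sq_sqrt (by linarith)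
      have h3 : (0:ℝ) ≤ Real.sqrt u := Real.sqrt_nonneg _
      have h4 : (0:ℝ) ≤ Real.sqrt (-w) := Real.sqrt_nonneg _
      rw [abs_of_nonneg h3, abs_of_pos (show (0:ℝ) < u - w by linarith)]
      nlinarith [sq_nonneg (Real.sqrt u - Real.sqrt (-w))]
  · rw [abs_of_pos hw]
    rcases le_or_gt u 0 with hu | hu
    · rw [Real.sqrt_eq_zero'.mpr hu, zero_sub, abs_neg, abs_of_nonneg (Real.sqrt_nonneg _),
        Real.mul_self_sqrt hw.le, abs_of_neg (show u - w < 0 by linarith)]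
      linarith
    · have h1 : Real.sqrt u ^ 2 = u := Real.sq_sqrt hu.le
      have h2 : Real.sqrt w ^ 2 = w := Real.sq_sqrt hw.le
      have h3 : (0:ℝ) ≤ Real.sqrt u := Real.sqrt_nonneg _
      have h4 : (0:ℝ) < Real.sqrt w := Real.sqrt_pos.2 hw
      have key : |Real.sqrt u - Real.sqrt w| * (Real.sqrt u + Real.sqrt w) = |u - w| := by
        rw [← abs_of_nonneg (show (0:ℝ) ≤ Real.sqrt u + Real.sqrt w by linarith), ← abs_mul]
        congr 1; nlinarith
      calc |Real.sqrt u - Real.sqrt w| * Real.sqrt w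
          ≤ |Real.sqrt u - Real.sqrt w| * (Real.sqrt u + Real.sqrt w) := by
            apply mul_le_mul_of_nonneg_left (by linarith) (abs_nonneg _)
        _ = |u - w| := key

lemma slope_sqrt_le {E E' v : ℝ} (hv : v ≠ E) :
    |slope (fun z => Real.sqrt (z - v)) E E'| ≤ (Real.sqrt |E - v|)⁻¹ := by
  have hEv : E - v ≠ 0 := sub_ne_zero.2 (Ne.symm hv)
  have hpos : 0 < Real.sqrt |E - v| := Real.sqrt_pos.2 (abs_pos.2 hEv)
  rcases eq_or_ne E' E with rfl | hne
  · simp [slope_same]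
  · rw [slope_def_field, abs_div]
    rw [div_le_iff₀ (abs_pos.2 (sub_ne_zero.2 hne))]
    have h := sqrt_lip (E' - v) (E - v)
    have heq : |E' - v - (E - v)| = |E' - E| := by ring_nf
    rw [heq] at h
    calc |Real.sqrt (E' - v) - Real.sqrt (E - v)|
        = (Real.sqrt |E - v|)⁻¹ * (|Real.sqrt (E' - v) - Real.sqrt (E - v)| * Real.sqrt |E - v|) := by
          field_simp
      _ ≤ (Real.sqrt |E - v|)⁻¹ * |E' - E| := by
          apply mul_le_mul_of_nonneg_left h (by positivity)

lemma hasDerivAt_of_factor (f g : ℝ → ℝ) (c : ℝ) (hg : ContinuousAt g c)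
    (h : ∀ x, f x - f c = (x - c) * g x) : HasDerivAt f (g c) c := by
  rw [hasDerivAt_iff_tendsto_slope]
  have h1 : Set.EqOn (slope f c) g {c}ᶜ := by
    intro x hx
    have hxc : x - c ≠ 0 := sub_ne_zero.2 hx
    rw [slope_def_field, div_eq_iff hxc, h x, mul_comm]
  exact Filter.Tendsto.congr' (Filter.eventuallyEq_of_mem self_mem_nhdsWithin h1.symm)
    (hg.continuousWithinAt.tendsto)

lemma mvt_bound {f f' : ℝ → ℝ} {u v K : ℝ} (huv : u < v)
    (hf : ∀ x, HasDerivAt f (f' x) x) (hK : ∀ x ∈ Ioo u v, f' x ≤ K) :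
    f v - f u ≤ K * (v - u) := by
  obtain ⟨c, hc, hc'⟩ := exists_hasDerivAt_eq_slope f f' huv
    (fun x _ => (hf x).continuousAt.continuousWithinAt) (fun x _ => hf x)
  have h := hK c hc
  rw [hc'] at h
  have hvu : 0 < v - u := by linarith
  calc f v - f u = (f v - f u) / (v - u) * (v - u) := by field_simp
    _ ≤ K * (v - u) := by apply mul_le_mul_of_nonneg_right h hvu.le

lemma integrableOn_right_rpow_half (t q : ℝ) :
    IntegrableOn (fun x => |x - t| ^ (-(1/2) : ℝ)) (Icc t q) := by
  have h1 : IntervalIntegrable (fun x : ℝ => (x - t) ^ (-(1/2) : ℝ)) volume t q := by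
    simpa using (intervalIntegral.intervalIntegrable_rpow' (a := t - t) (b := q - t)
      (r := (-(1/2) : ℝ)) (by norm_num)).comp_sub_right t
  rcases le_or_gt t q with h | h
  · have h2 : IntegrableOn (fun x : ℝ => (x - t) ^ (-(1/2) : ℝ)) (Icc t q) :=
      (integrableOn_Icc_iff_integrableOn_Ioc (ha := enorm_ne_top)).mpr
        ((intervalIntegrable_iff_integrableOn_Ioc_of_le h).mp h1)
    exact h2.congr_fun (fun x hx => by
      rw [abs_of_nonneg (by linarith [hx.1] : (0:ℝ) ≤ x - t)]) measurableSet_Icc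
  · simp [Icc_eq_empty_of_lt h]

lemma integrableOn_left_rpow_half (t p : ℝ) :
    IntegrableOn (fun x => |x - t| ^ (-(1/2) : ℝ)) (Icc p t) := by
  have h1 : IntervalIntegrable (fun x : ℝ => (t - x) ^ (-(1/2) : ℝ)) volume p t := by
    simpa using (intervalIntegral.intervalIntegrable_rpow' (a := t - p) (b := t - t)
      (r := (-(1/2) : ℝ)) (by norm_num)).comp_sub_left t
  rcases le_or_gt p t with h | h
  · have h2 : IntegrableOn (fun x : ℝ => (t - x) ^ (-(1/2) : ℝ)) (Icc p t) :=
      (integrableOn_Icc_iff_integrableOn_Ioc (ha := enorm_ne_top)).mpr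
        ((intervalIntegrable_iff_integrableOn_Ioc_of_le h).mp h1)
    exact h2.congr_fun (fun x hx => by
      rw [abs_of_nonpos (by linarith [hx.2] : x - t ≤ 0), neg_sub]) measurableSet_Icc
  · simp [Icc_eq_empty_of_lt h]

lemma integrableOn_abs_rpow_half (t p q : ℝ) :
    IntegrableOn (fun x => |x - t| ^ (-(1/2) : ℝ)) (Icc p q) := by
  have hsub : Icc p q ⊆ Icc (min p t) t ∪ Icc t (max q t) := by
    intro x hx
    rcases le_or_gt x t with h | h
    · exact Or.inl ⟨min_le_of_left_le hx.1, h⟩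
    · exact Or.inr ⟨h.le, le_max_of_le_left hx.2⟩
  exact ((integrableOn_left_rpow_half t (min p t)).union
    (integrableOn_right_rpow_half t (max q t))).mono_set hsub

lemma integrableOn_inv_sqrt_abs {g : ℝ → ℝ} (hg : Continuous g) {t u v m : ℝ} (hm : 0 < m)
    (hgt : g t = 0) (hbd : ∀ x ∈ Icc u v, m * |x - t| ≤ |g x|) :
    IntegrableOn (fun x => (Real.sqrt |g x|)⁻¹) (Icc u v) := by
  have hmeas : AEStronglyMeasurable (fun x => (Real.sqrt |g x|)⁻¹)
      (volume.restrict (Icc u v)) :=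
    ((hg.abs.sqrt).measurable.inv).aestronglyMeasurable
  have hdom : IntegrableOn (fun x => (Real.sqrt m)⁻¹ * |x - t| ^ (-(1/2):ℝ)) (Icc u v) :=
    (integrableOn_abs_rpow_half t u v).const_mul _
  refine Integrable.mono hdom hmeas ?_
  refine (ae_restrict_iff' measurableSet_Icc).2 (Filter.Eventually.of_forall fun x hx => ?_)
  have hR0 : (0:ℝ) ≤ (Real.sqrt m)⁻¹ * |x - t| ^ (-(1/2):ℝ) := by positivity
  rw [Real.norm_eq_abs, Real.norm_eq_abs, abs_of_nonneg (by positivity), abs_of_nonneg hR0]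
  rcases eq_or_ne x t with rfl | hxt
  · rw [hgt]; simpa using hR0
  · have h1 : 0 < |x - t| := abs_pos.2 (sub_ne_zero.2 hxt)
    have h2 : Real.sqrt (m * |x - t|) ≤ Real.sqrt |g x| := Real.sqrt_le_sqrt (hbd x hx)
    have h3 : 0 < Real.sqrt (m * |x - t|) := Real.sqrt_pos.2 (by positivity)
    calc (Real.sqrt |g x|)⁻¹ ≤ (Real.sqrt (m * |x - t|))⁻¹ := by
          apply inv_anti₀ h3 h2
      _ = (Real.sqrt m)⁻¹ * |x - t| ^ (-(1/2):ℝ) := by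
          rw [Real.sqrt_mul hm.le, mul_inv]
          congr 1
          rw [Real.sqrt_eq_rpow, ← Real.rpow_neg (abs_nonneg _)]

end Aux

/-- Smoothness near `E₀` of the turning points and of the action integral for a simple well:
under the simple-well condition `V − E₀ = (x−a₀)(x−b₀)q`, `q > 0` continuous, there are C¹
turning-point functions `a(E), b(E)` with `a(E₀)=a₀`, `b(E₀)=b₀`, `V(a(E)) = V(b(E)) = E`,
`V < E` on `(a(E), b(E))`; `(E − V)^{−1/2}` is integrable on `(a(E), b(E))`, and the action
`A(E) = 2∫_{a(E)}^{b(E)} √(E − V)` is differentiable with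
`A'(E) = ∫_{a(E)}^{b(E)} (E − V)^{−1/2} > 0`. -/
theorem stmt_13 (V : ℝ → ℝ) (hV : ContDiff ℝ (⊤ : ℕ∞) V)
    (E₀ a₀ b₀ : ℝ) (hab : a₀ < b₀)
    (q : ℝ → ℝ) (hq : Continuous q) (hqpos : ∀ x, 0 < q x)
    (hfac : ∀ x, V x - E₀ = (x - a₀) * (x - b₀) * q x) :
    ∃ ε > 0, ∃ a b : ℝ → ℝ,
      ContDiffOn ℝ 1 a (Ioo (E₀ - ε) (E₀ + ε)) ∧
      ContDiffOn ℝ 1 b (Ioo (E₀ - ε) (E₀ + ε)) ∧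
      a E₀ = a₀ ∧ b E₀ = b₀ ∧
      ∀ E ∈ Ioo (E₀ - ε) (E₀ + ε),
        a E < b E ∧ V (a E) = E ∧ V (b E) = E ∧
        (∀ x ∈ Ioo (a E) (b E), V x < E) ∧
        IntegrableOn (fun x => (Real.sqrt (E - V x))⁻¹) (Ioo (a E) (b E)) ∧
        HasDerivAt (fun E' => 2 * ∫ x in a E'..b E', Real.sqrt (E' - V x))
          (∫ x in a E..b E, (Real.sqrt (E - V x))⁻¹) E ∧
        0 < ∫ x in a E..b E, (Real.sqrt (E - V x))⁻¹ := by
  classical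
  have hVc : Continuous V := hV.continuous
  have hVa0 : V a₀ = E₀ := by have h := hfac a₀; simp at h; linarith
  have hVb0 : V b₀ = E₀ := by have h := hfac b₀; simp at h; linarith
  have hone : (1 : WithTop ℕ∞) ≤ ((⊤:ℕ∞) : WithTop ℕ∞) := by exact_mod_cast le_top
  have hVdiff : ∀ x, HasDerivAt V (deriv V x) x := fun x =>
    ((hV.differentiable (by simp)) x).hasDerivAt
  have hWc : Continuous (deriv V) := hV.continuous_deriv hone
  set va' : ℝ := (a₀ - b₀) * q a₀ with hva'def
  set vb' : ℝ := (b₀ - a₀) * q b₀ with hvb'def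
  have hva' : HasDerivAt V va' a₀ := by
    apply hasDerivAt_of_factor V (fun x => (x - b₀) * q x) a₀
      (((continuous_id.sub continuous_const).mul hq).continuousAt)
    intro x; rw [hVa0, hfac x]; ring
  have hvb' : HasDerivAt V vb' b₀ := by
    apply hasDerivAt_of_factor V (fun x => (x - a₀) * q x) b₀
      (((continuous_id.sub continuous_const).mul hq).continuousAt)
    intro x; rw [hVb0, hfac x]; ring
  have hva'neg : va' < 0 := mul_neg_of_neg_of_pos (by linarith) (hqpos a₀)
  have hvb'pos : 0 < vb' := mul_pos (by linarith) (hqpos b₀)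
  -- choose δ
  obtain ⟨δa, hδa, hWneg⟩ : ∃ δa > 0, ∀ x, |x - a₀| ≤ δa → deriv V x ≤ va' / 2 := by
    have h1 : ∀ᶠ x in 𝓝 a₀, deriv V x < va' / 2 := by
      have hc := hWc.continuousAt (x := a₀)
      rw [ContinuousAt, hva'.deriv] at hc
      exact hc.eventually_lt_const (by linarith)
    obtain ⟨r, hr, hball⟩ := Metric.eventually_nhds_iff.mp h1
    exact ⟨r/2, by linarith, fun x hx => (hball (by rw [Real.dist_eq]; linarith)).le⟩
  obtain ⟨δb, hδb, hWpos⟩ : ∃ δb > 0, ∀ x, |x - b₀| ≤ δb → vb' / 2 ≤ deriv V x := by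
    have h1 : ∀ᶠ x in 𝓝 b₀, vb' / 2 < deriv V x := by
      have hc := hWc.continuousAt (x := b₀)
      rw [ContinuousAt, hvb'.deriv] at hc
      exact hc.eventually_const_lt (by linarith)
    obtain ⟨r, hr, hball⟩ := Metric.eventually_nhds_iff.mp h1
    exact ⟨r/2, by linarith, fun x hx => (hball (by rw [Real.dist_eq]; linarith)).le⟩
  set δ : ℝ := min (min δa δb) ((b₀ - a₀) / 4) with hδdef
  have hδ : 0 < δ := lt_min (lt_min hδa hδb) (by linarith)
  have hδa' : δ ≤ δa := (min_le_left _ _).trans (min_le_left _ _)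
  have hδb' : δ ≤ δb := (min_le_left _ _).trans (min_le_right _ _)
  have hδq : δ ≤ (b₀ - a₀) / 4 := min_le_right _ _
  have hsep : a₀ + δ < b₀ - δ := by linarith
  set m : ℝ := min (-va' / 2) (vb' / 2) with hmdef
  have hm : 0 < m := lt_min (by linarith) (by linarith)
  have hFA : ∀ x ∈ Icc (a₀ - δ) (a₀ + δ), deriv V x ≤ -m := by
    intro x hx
    have := hWneg x (abs_le.mpr ⟨by linarith [hx.1], by linarith [hx.2]⟩)
    have hm1 : m ≤ -va' / 2 := min_le_left _ _
    linarith
  have hFB : ∀ x ∈ Icc (b₀ - δ) (b₀ + δ), m ≤ deriv V x := by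
    intro x hx
    have := hWpos x (abs_le.mpr ⟨by linarith [hx.1], by linarith [hx.2]⟩)
    have hm1 : m ≤ vb' / 2 := min_le_right _ _
    linarith
  have keyA : ∀ x ∈ Icc (a₀ - δ) (a₀ + δ), ∀ y ∈ Icc (a₀ - δ) (a₀ + δ), x < y →
      V y - V x ≤ -m * (y - x) := by
    intro x hx y hy hxy
    exact mvt_bound hxy hVdiff fun z hz =>
      hFA z ⟨by linarith [hz.1, hx.1], by linarith [hz.2, hy.2]⟩
  have keyB : ∀ x ∈ Icc (b₀ - δ) (b₀ + δ), ∀ y ∈ Icc (b₀ - δ) (b₀ + δ), x < y →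
      m * (y - x) ≤ V y - V x := by
    intro x hx y hy hxy
    have := mvt_bound (f := fun z => -V z) (f' := fun z => -deriv V z) (K := -m) hxy
      (fun z => (hVdiff z).neg) (fun z hz => by
        have := hFB z ⟨by linarith [hz.1, hx.1], by linarith [hz.2, hy.2]⟩
        show -deriv V z ≤ -m; linarith)
    simp only [neg_mul] at this
    linarith
  -- maximum on the middle
  obtain ⟨x₀, hx₀K, hx₀max⟩ := isCompact_Icc.exists_isMaxOn
    (nonempty_Icc.mpr hsep.le) (hVc.continuousOn (s := Icc (a₀ + δ) (b₀ - δ)))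
  set M : ℝ := V x₀ with hMdef
  have hMid : ∀ x ∈ Icc (a₀ + δ) (b₀ - δ), V x ≤ M := fun x hx => hx₀max hx
  have hMlt : M < E₀ := by
    have h := hfac x₀
    have h1 : a₀ < x₀ := by linarith [hx₀K.1]
    have h2 : x₀ < b₀ := by linarith [hx₀K.2]
    have hneg : (x₀ - a₀) * (x₀ - b₀) * q x₀ < 0 :=
      mul_neg_of_neg_of_pos (mul_neg_of_pos_of_neg (by linarith) (by linarith)) (hqpos x₀)
    linarith
  -- endpoint values
  have hVal1 : V (a₀ + δ) ≤ E₀ - m * δ := by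
    have := keyA a₀ ⟨by linarith, by linarith⟩ (a₀ + δ) ⟨by linarith, le_refl _⟩ (by linarith)
    rw [hVa0] at this; linarith
  have hVal2 : E₀ + m * δ ≤ V (a₀ - δ) := by
    have := keyA (a₀ - δ) ⟨le_refl _, by linarith⟩ a₀ ⟨by linarith, by linarith⟩ (by linarith)
    rw [hVa0] at this; linarith
  have hVal3 : V (b₀ - δ) ≤ E₀ - m * δ := by
    have := keyB (b₀ - δ) ⟨le_refl _, by linarith⟩ b₀ ⟨by linarith, by linarith⟩ (by linarith)
    rw [hVb0] at this; linarith
  have hVal4 : E₀ + m * δ ≤ V (b₀ + δ) := by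
    have := keyB b₀ ⟨by linarith, by linarith⟩ (b₀ + δ) ⟨by linarith, le_refl _⟩ (by linarith)
    rw [hVb0] at this; linarith
  -- inverse functions via the inverse function theorem
  have hVcd : ContDiffAt ℝ ((⊤:ℕ∞) : WithTop ℕ∞) V a₀ := hV.contDiffAt
  have hVcd' : ContDiffAt ℝ ((⊤:ℕ∞) : WithTop ℕ∞) V b₀ := hV.contDiffAt
  set ea : ℝ ≃L[ℝ] ℝ := ContinuousLinearEquiv.unitsEquivAut ℝ (Units.mk0 va' hva'neg.ne)
    with headef
  set eb : ℝ ≃L[ℝ] ℝ := ContinuousLinearEquiv.unitsEquivAut ℝ (Units.mk0 vb' hvb'pos.ne')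
    with hebdef
  have hfa : HasFDerivAt V (ea : ℝ →L[ℝ] ℝ) a₀ := by
    have heq : (ea : ℝ →L[ℝ] ℝ) = ContinuousLinearMap.smulRight (1 : ℝ →L[ℝ] ℝ) va' := by
      ext x
      simp [headef, ContinuousLinearEquiv.unitsEquivAut, smul_eq_mul]
    rw [heq]; exact hva'.hasFDerivAt
  have hfb : HasFDerivAt V (eb : ℝ →L[ℝ] ℝ) b₀ := by
    have heq : (eb : ℝ →L[ℝ] ℝ) = ContinuousLinearMap.smulRight (1 : ℝ →L[ℝ] ℝ) vb' := by
      ext x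
      simp [hebdef, ContinuousLinearEquiv.unitsEquivAut, smul_eq_mul]
    rw [heq]; exact hvb'.hasFDerivAt
  have hsa : HasStrictFDerivAt V (ea : ℝ →L[ℝ] ℝ) a₀ := hVcd.hasStrictFDerivAt' hfa (by simp)
  have hsb : HasStrictFDerivAt V (eb : ℝ →L[ℝ] ℝ) b₀ := hVcd'.hasStrictFDerivAt' hfb (by simp)
  obtain ⟨a, haE₀, hra, hca, hCai⟩ : ∃ a : ℝ → ℝ, a E₀ = a₀ ∧ (∀ᶠ y in 𝓝 E₀, V (a y) = y) ∧
      ContinuousAt a E₀ ∧ ContDiffAt ℝ ((⊤:ℕ∞) : WithTop ℕ∞) a E₀ := by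
    refine ⟨hsa.localInverse V ea a₀, ?_, ?_, ?_, ?_⟩
    · have := hsa.localInverse_apply_image; rwa [hVa0] at this
    · have := hsa.eventually_right_inverse; rwa [hVa0] at this
    · have := hsa.localInverse_continuousAt; rwa [hVa0] at this
    · have := hVcd.to_localInverse (hf' := hfa) (hn := by simp)
      rw [hVa0] at this
      exact this
  obtain ⟨b, hbE₀, hrb, hcb, hCbi⟩ : ∃ b : ℝ → ℝ, b E₀ = b₀ ∧ (∀ᶠ y in 𝓝 E₀, V (b y) = y) ∧
      ContinuousAt b E₀ ∧ ContDiffAt ℝ ((⊤:ℕ∞) : WithTop ℕ∞) b E₀ := by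
    refine ⟨hsb.localInverse V eb b₀, ?_, ?_, ?_, ?_⟩
    · have := hsb.localInverse_apply_image; rwa [hVb0] at this
    · have := hsb.eventually_right_inverse; rwa [hVb0] at this
    · have := hsb.localInverse_continuousAt; rwa [hVb0] at this
    · have := hVcd'.to_localInverse (hf' := hfb) (hn := by simp)
      rw [hVb0] at this
      exact this
  have haI : ∀ᶠ y in 𝓝 E₀, a y ∈ Ioo (a₀ - δ) (a₀ + δ) := by
    refine hca.eventually_mem ?_
    rw [haE₀]; exact isOpen_Ioo.mem_nhds ⟨by linarith, by linarith⟩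
  have hbI : ∀ᶠ y in 𝓝 E₀, b y ∈ Ioo (b₀ - δ) (b₀ + δ) := by
    refine hcb.eventually_mem ?_
    rw [hbE₀]; exact isOpen_Ioo.mem_nhds ⟨by linarith, by linarith⟩
  obtain ⟨ua, hua, hCa⟩ : ∃ u ∈ 𝓝 E₀, ContDiffOn ℝ 1 a u :=
    hCai.contDiffOn hone (by simp)
  obtain ⟨ub, hub, hCb⟩ : ∃ u ∈ 𝓝 E₀, ContDiffOn ℝ 1 b u :=
    hCbi.contDiffOn hone (by simp)
  have hua' : ∀ᶠ y in 𝓝 E₀, y ∈ ua := hua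
  have hub' : ∀ᶠ y in 𝓝 E₀, y ∈ ub := hub
  have hev : ∀ᶠ y in 𝓝 E₀, (V (a y) = y ∧ a y ∈ Ioo (a₀-δ) (a₀+δ)) ∧
      (V (b y) = y ∧ b y ∈ Ioo (b₀-δ) (b₀+δ)) ∧ y ∈ ua ∧ y ∈ ub :=
    (hra.and haI).and ((hrb.and hbI).and (hua'.and hub'))
  obtain ⟨ε₁, hε₁, hball⟩ := Metric.eventually_nhds_iff.mp hev
  set ε : ℝ := min (min (ε₁/2) (m*δ)) (E₀ - M) with hεdef
  have hεe : ε ≤ ε₁/2 := (min_le_left _ _).trans (min_le_left _ _)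
  have hεm : ε ≤ m*δ := (min_le_left _ _).trans (min_le_right _ _)
  have hεM : ε ≤ E₀ - M := min_le_right _ _
  have hε : 0 < ε := lt_min (lt_min (by linarith) (by positivity)) (by linarith)
  have hεP : ∀ E ∈ Ioo (E₀ - ε) (E₀ + ε), (V (a E) = E ∧ a E ∈ Ioo (a₀-δ) (a₀+δ)) ∧
      (V (b E) = E ∧ b E ∈ Ioo (b₀-δ) (b₀+δ)) ∧ E ∈ ua ∧ E ∈ ub := by
    intro E hE
    apply hball
    rw [Real.dist_eq, abs_lt]
    exact ⟨by linarith [hE.1], by linarith [hE.2]⟩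
  refine ⟨ε, hε, a, b, hCa.mono (fun y hy => ((hεP y hy).2.2.1)),
    hCb.mono (fun y hy => ((hεP y hy).2.2.2)), haE₀, hbE₀, ?_⟩
  have hcont1 : ∀ E' : ℝ, Continuous fun x => Real.sqrt (E' - V x) :=
    fun E' => (continuous_const.sub hVc).sqrt
  -- master facts
  have master : ∀ E ∈ Ioo (E₀ - ε) (E₀ + ε),
      (∀ x ∈ Icc (a₀ - δ) (a E), E ≤ V x) ∧ (∀ x ∈ Icc (b E) (b₀ + δ), E ≤ V x) ∧
      (∀ x ∈ Ioo (a E) (b E), V x < E) ∧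
      (∀ x ∈ Icc (a₀ - δ) (a₀ + δ), m * |x - a E| ≤ |E - V x|) ∧
      (∀ x ∈ Icc (b₀ - δ) (b₀ + δ), m * |x - b E| ≤ |E - V x|) := by
    intro E hE
    obtain ⟨⟨hVaE, haEI⟩, ⟨hVbE, hbEI⟩, -, -⟩ := hεP E hE
    have hEM : M < E := by linarith [hE.1]
    have haIcc : a E ∈ Icc (a₀ - δ) (a₀ + δ) := ⟨haEI.1.le, haEI.2.le⟩
    have hbIcc : b E ∈ Icc (b₀ - δ) (b₀ + δ) := ⟨hbEI.1.le, hbEI.2.le⟩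
    refine ⟨?_, ?_, ?_, ?_, ?_⟩
    · intro x hx
      rcases eq_or_lt_of_le hx.2 with heq | hlt
      · rw [heq]; exact hVaE.ge
      · have h1 := keyA x ⟨hx.1, by linarith [haEI.2]⟩ (a E) haIcc hlt
        rw [hVaE] at h1
        nlinarith [mul_pos hm (sub_pos.2 hlt)]
    · intro x hx
      rcases eq_or_lt_of_le hx.1 with heq | hlt
      · rw [← heq]; exact hVbE.ge
      · have h1 := keyB (b E) hbIcc x ⟨by linarith [hbEI.1], hx.2⟩ hlt
        rw [hVbE] at h1
        nlinarith [mul_pos hm (sub_pos.2 hlt)]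
    · intro x hx
      rcases le_or_gt x (a₀ + δ) with h1 | h1
      · have h2 := keyA (a E) haIcc x ⟨by linarith [haEI.1, hx.1], h1⟩ hx.1
        rw [hVaE] at h2
        nlinarith [mul_pos hm (sub_pos.2 hx.1)]
      rcases le_or_gt x (b₀ - δ) with h2 | h2
      · have := hMid x ⟨h1.le, h2⟩; linarith
      · have h3 := keyB x ⟨h2.le, by linarith [hx.2, hbEI.2]⟩ (b E) hbIcc hx.2
        rw [hVbE] at h3
        nlinarith [mul_pos hm (sub_pos.2 hx.2)]
    · intro x hx
      rcases lt_trichotomy x (a E) with h | h | h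
      · have h1 := keyA x ⟨hx.1, by linarith [haEI.2]⟩ (a E) haIcc h
        rw [hVaE] at h1
        have hp := mul_pos hm (sub_pos.2 h)
        rw [abs_of_neg (by linarith : x - a E < 0),
          abs_of_neg (show E - V x < 0 by nlinarith)]
        nlinarith
      · rw [h]; simp [hVaE]
      · have h1 := keyA (a E) haIcc x ⟨by linarith [haEI.1], hx.2⟩ h
        rw [hVaE] at h1
        have hp := mul_pos hm (sub_pos.2 h)
        rw [abs_of_pos (by linarith : 0 < x - a E),
          abs_of_pos (show 0 < E - V x by nlinarith)]
        nlinarith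
    · intro x hx
      rcases lt_trichotomy x (b E) with h | h | h
      · have h1 := keyB x ⟨hx.1, by linarith [hbEI.2]⟩ (b E) hbIcc h
        rw [hVbE] at h1
        have hp := mul_pos hm (sub_pos.2 h)
        rw [abs_of_neg (by linarith : x - b E < 0),
          abs_of_pos (show 0 < E - V x by nlinarith)]
        nlinarith
      · rw [h]; simp [hVbE]
      · have h1 := keyB (b E) hbIcc x ⟨by linarith [hbEI.1], hx.2⟩ h
        rw [hVbE] at h1
        have hp := mul_pos hm (sub_pos.2 h)
        rw [abs_of_pos (by linarith : 0 < x - b E),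
          abs_of_neg (show E - V x < 0 by nlinarith)]
        nlinarith
  -- moving-endpoint integral equals fixed-endpoint integral
  have hfix : ∀ E' ∈ Ioo (E₀ - ε) (E₀ + ε),
      ∫ x in a E'..b E', Real.sqrt (E' - V x)
        = ∫ x in Ioc (a₀ - δ) (b₀ + δ), Real.sqrt (E' - V x) := by
    intro E' hE'
    obtain ⟨⟨hVaE, haEI⟩, ⟨hVbE, hbEI⟩, -, -⟩ := hεP E' hE'
    obtain ⟨hgeL, hgeR, -, -, -⟩ := master E' hE'
    have h1 : IntervalIntegrable (fun x => Real.sqrt (E' - V x)) volume (a₀ - δ) (a E') :=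
      (hcont1 E').intervalIntegrable _ _
    have h2 : IntervalIntegrable (fun x => Real.sqrt (E' - V x)) volume (a E') (b E') :=
      (hcont1 E').intervalIntegrable _ _
    have h3 : IntervalIntegrable (fun x => Real.sqrt (E' - V x)) volume (b E') (b₀ + δ) :=
      (hcont1 E').intervalIntegrable _ _
    have h12 : IntervalIntegrable (fun x => Real.sqrt (E' - V x)) volume (a₀ - δ) (b E') :=
      (hcont1 E').intervalIntegrable _ _
    have z1 : ∫ x in (a₀ - δ)..(a E'), Real.sqrt (E' - V x) = 0 := by
      have heq : EqOn (fun x => Real.sqrt (E' - V x)) (fun _ => (0:ℝ))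
          (uIcc (a₀ - δ) (a E')) := by
        intro x hx
        rw [uIcc_of_le (by linarith [haEI.1])] at hx
        exact Real.sqrt_eq_zero'.mpr (by linarith [hgeL x hx])
      rw [intervalIntegral.integral_congr heq, intervalIntegral.integral_zero]
    have z3 : ∫ x in (b E')..(b₀ + δ), Real.sqrt (E' - V x) = 0 := by
      have heq : EqOn (fun x => Real.sqrt (E' - V x)) (fun _ => (0:ℝ))
          (uIcc (b E') (b₀ + δ)) := by
        intro x hx
        rw [uIcc_of_le (by linarith [hbEI.2])] at hx
        exact Real.sqrt_eq_zero'.mpr (by linarith [hgeR x hx])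
      rw [intervalIntegral.integral_congr heq, intervalIntegral.integral_zero]
    have hsum1 := intervalIntegral.integral_add_adjacent_intervals h1 h2
    have hsum2 := intervalIntegral.integral_add_adjacent_intervals h12 h3
    have hle : a₀ - δ ≤ b₀ + δ := by linarith
    rw [← intervalIntegral.integral_of_le hle, ← hsum2, ← hsum1, z1, z3]
    ring
  -- the per-energy conclusions
  intro E hE
  obtain ⟨⟨hVaE, haEI⟩, ⟨hVbE, hbEI⟩, -, -⟩ := hεP E hE
  obtain ⟨hgeL, hgeR, hVlt, hQA, hQB⟩ := master E hE
  have hEM : M < E := by linarith [hE.1]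
  have hlt : a E < b E := by linarith [haEI.2, hbEI.1]
  have hBint : IntegrableOn (fun x => (Real.sqrt |E - V x|)⁻¹) (Icc (a₀-δ) (b₀+δ)) := by
    have hA : IntegrableOn (fun x => (Real.sqrt |E - V x|)⁻¹) (Icc (a₀-δ) (a₀+δ)) := by
      refine integrableOn_inv_sqrt_abs (continuous_const.sub hVc) hm ?_ hQA
      simp [hVaE]
    have hB2 : IntegrableOn (fun x => (Real.sqrt |E - V x|)⁻¹) (Icc (b₀-δ) (b₀+δ)) := by
      refine integrableOn_inv_sqrt_abs (continuous_const.sub hVc) hm ?_ hQB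
      simp [hVbE]
    have hMI : IntegrableOn (fun x => (Real.sqrt |E - V x|)⁻¹) (Icc (a₀+δ) (b₀-δ)) := by
      apply ContinuousOn.integrableOn_compact isCompact_Icc
      apply ContinuousOn.inv₀ ((continuous_const.sub hVc).abs.sqrt).continuousOn
      intro x hx
      have := hMid x hx
      exact (Real.sqrt_pos.2 (abs_pos.2 (by intro hc; simp only [Pi.sub_apply] at hc; linarith))).ne'
    refine ((hA.union hMI).union hB2).mono_set ?_
    intro x hx
    rcases le_or_gt x (a₀+δ) with h1 | h1
    · exact Or.inl (Or.inl ⟨hx.1, h1⟩)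
    rcases le_or_gt x (b₀-δ) with h2 | h2
    · exact Or.inl (Or.inr ⟨h1.le, h2⟩)
    · exact Or.inr ⟨h2.le, hx.2⟩
  have hIooSub : Ioo (a E) (b E) ⊆ Icc (a₀-δ) (b₀+δ) := fun x hx =>
    ⟨by linarith [hx.1, haEI.1], by linarith [hx.2, hbEI.2]⟩
  have hIooSub' : Ioo (a E) (b E) ⊆ Ioc (a₀-δ) (b₀+δ) := fun x hx =>
    ⟨by linarith [hx.1, haEI.1], by linarith [hx.2, hbEI.2]⟩
  have hIntInv : IntegrableOn (fun x => (Real.sqrt (E - V x))⁻¹) (Ioo (a E) (b E)) := by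
    refine (hBint.mono_set hIooSub).congr_fun (fun x hx => ?_) measurableSet_Ioo
    dsimp only
    rw [abs_of_pos (by linarith [hVlt x hx] : (0:ℝ) < E - V x)]
  have hIntIoc : IntegrableOn (fun x => (Real.sqrt (E - V x))⁻¹) (Ioc (a E) (b E)) := by
    rw [integrableOn_Ioc_iff_integrableOn_Ioo]; exact hIntInv
  have hII : IntervalIntegrable (fun x => (Real.sqrt (E - V x))⁻¹) volume (a E) (b E) :=
    (intervalIntegrable_iff_integrableOn_Ioc_of_le hlt.le).mpr hIntIoc
  have hposint : 0 < ∫ x in a E..b E, (Real.sqrt (E - V x))⁻¹ := by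
    apply intervalIntegral.intervalIntegral_pos_of_pos_on hII ?_ hlt
    intro x hx
    exact inv_pos.2 (Real.sqrt_pos.2 (by linarith [hVlt x hx]))
  -- null set of turning points
  have hnull : ∀ᵐ x ∂(volume.restrict (Ioc (a₀-δ) (b₀+δ))), V x ≠ E := by
    have hsub : {x | x ∈ Ioc (a₀-δ) (b₀+δ) ∧ V x = E} ⊆ {a E, b E} := by
      rintro x ⟨hx1, hx2⟩
      simp only [mem_insert_iff, mem_singleton_iff]
      rcases le_or_gt x (a₀+δ) with h1 | h1
      · have h3 := hQA x ⟨hx1.1.le, h1⟩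
        rw [hx2, sub_self, abs_zero] at h3
        have h4 : |x - a E| = 0 :=
          le_antisymm (by nlinarith [abs_nonneg (x - a E)]) (abs_nonneg _)
        exact Or.inl (sub_eq_zero.mp (abs_eq_zero.mp h4))
      rcases le_or_gt x (b₀-δ) with h2 | h2
      · exfalso
        have := hMid x ⟨h1.le, h2⟩
        rw [hx2] at this; linarith
      · have h3 := hQB x ⟨h2.le, hx1.2⟩
        rw [hx2, sub_self, abs_zero] at h3
        have h4 : |x - b E| = 0 :=
          le_antisymm (by nlinarith [abs_nonneg (x - b E)]) (abs_nonneg _)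
        exact Or.inr (sub_eq_zero.mp (abs_eq_zero.mp h4))
    rw [ae_restrict_iff' measurableSet_Ioc, ae_iff]
    refine measure_mono_null ?_
      (((Set.finite_singleton (b E)).insert (a E)).countable.measure_zero _)
    intro x hx
    simp only [mem_setOf_eq] at hx
    push_neg at hx
    exact hsub ⟨hx.1, hx.2⟩
  -- dominated convergence for the slope
  have hΦint : ∀ E' : ℝ, IntegrableOn (fun x => Real.sqrt (E' - V x)) (Ioc (a₀-δ) (b₀+δ)) :=
    fun E' => (hcont1 E').integrableOn_Ioc
  have hFmeas : ∀ᶠ E' in nhdsWithin E {E}ᶜ, AEStronglyMeasurable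
      (fun x => slope (fun z => Real.sqrt (z - V x)) E E')
      (volume.restrict (Ioc (a₀-δ) (b₀+δ))) := by
    refine Filter.Eventually.of_forall fun E' => Continuous.aestronglyMeasurable ?_
    simp only [slope_def_field]
    exact ((hcont1 E').sub (hcont1 E)).div_const _
  have hbound : ∀ᶠ E' in nhdsWithin E {E}ᶜ, ∀ᵐ x ∂(volume.restrict (Ioc (a₀-δ) (b₀+δ))),
      ‖slope (fun z => Real.sqrt (z - V x)) E E'‖ ≤ (Real.sqrt |E - V x|)⁻¹ := by
    refine Filter.Eventually.of_forall fun E' => ?_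
    filter_upwards [hnull] with x hx
    rw [Real.norm_eq_abs]
    exact slope_sqrt_le hx
  have hBint' : Integrable (fun x => (Real.sqrt |E - V x|)⁻¹)
      (volume.restrict (Ioc (a₀-δ) (b₀+δ))) := hBint.mono_set Ioc_subset_Icc_self
  have hlim : ∀ᵐ x ∂(volume.restrict (Ioc (a₀-δ) (b₀+δ))),
      Filter.Tendsto (fun E' => slope (fun z => Real.sqrt (z - V x)) E E') (nhdsWithin E {E}ᶜ)
        (𝓝 (1/(2 * Real.sqrt (E - V x)))) := by
    filter_upwards [hnull] with x hx
    have h2 : HasDerivAt (fun z : ℝ => z - V x) 1 E := (hasDerivAt_id E).sub_const _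
    have h3 := (Real.hasDerivAt_sqrt (sub_ne_zero.2 (Ne.symm hx))).comp E h2
    have h4 : HasDerivAt (fun z => Real.sqrt (z - V x)) (1/(2 * Real.sqrt (E - V x))) E := by
      rw [mul_one] at h3; exact h3
    exact hasDerivAt_iff_tendsto_slope.1 h4
  have hDCT := MeasureTheory.tendsto_integral_filter_of_dominated_convergence
    (μ := volume.restrict (Ioc (a₀-δ) (b₀+δ)))
    (F := fun E' x => slope (fun z => Real.sqrt (z - V x)) E E') (l := nhdsWithin E {E}ᶜ)
    (bound := fun x => (Real.sqrt |E - V x|)⁻¹) hFmeas hbound hBint' hlim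
  have hΦder : HasDerivAt (fun E' => ∫ x in Ioc (a₀-δ) (b₀+δ), Real.sqrt (E' - V x))
      (∫ x in Ioc (a₀-δ) (b₀+δ), 1/(2 * Real.sqrt (E - V x))) E := by
    rw [hasDerivAt_iff_tendsto_slope]
    refine hDCT.congr' ?_
    filter_upwards [self_mem_nhdsWithin] with E' hne
    have hne' : E' ≠ E := hne
    rw [slope_def_field, ← MeasureTheory.integral_sub (hΦint E') (hΦint E),
      ← MeasureTheory.integral_div]
    congr 1
    funext x
    rw [slope_def_field]
  -- identify the derivative value
  have hval : (2:ℝ) * ∫ x in Ioc (a₀-δ) (b₀+δ), 1/(2 * Real.sqrt (E - V x))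
      = ∫ x in a E..b E, (Real.sqrt (E - V x))⁻¹ := by
    have hzero : ∀ x ∈ Ioc (a₀-δ) (b₀+δ) \ Ioo (a E) (b E),
        1/(2 * Real.sqrt (E - V x)) = 0 := by
      rintro x ⟨hx1, hx2⟩
      have hge : E ≤ V x := by
        rcases le_or_gt x (a E) with h | h
        · exact hgeL x ⟨hx1.1.le, h⟩
        · have h2 : b E ≤ x := by
            by_contra h3; push_neg at h3; exact hx2 ⟨h, h3⟩
          exact hgeR x ⟨h2, hx1.2⟩
      rw [Real.sqrt_eq_zero'.mpr (by linarith)]; simp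
    rw [MeasureTheory.setIntegral_eq_of_subset_of_forall_diff_eq_zero
      measurableSet_Ioc hIooSub' hzero]
    rw [intervalIntegral.integral_of_le hlt.le, MeasureTheory.integral_Ioc_eq_integral_Ioo]
    have hrw : (fun x => 1/(2 * Real.sqrt (E - V x)))
        = fun x => (2:ℝ)⁻¹ * (Real.sqrt (E - V x))⁻¹ := by
      funext x; rw [one_div, mul_inv]
    rw [hrw, MeasureTheory.integral_const_mul]
    ring
  have hD := HasDerivAt.const_mul (2:ℝ) hΦder
  rw [hval] at hD
  refine ⟨hlt, hVaE, hVbE, hVlt, hIntInv, ?_, hposint⟩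
  refine hD.congr_of_eventuallyEq ?_
  filter_upwards [isOpen_Ioo.mem_nhds hE] with E' hE'
  rw [hfix E' hE']
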